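/- arXiv:cs/0609124 — 5 statements merged into one kernel-verified Lean document; each statement's English description precedes it below -/
import Mathlib

section
/- Let α be irrational and N ≥ 2. Let first(N) be the unique f with 0 < f < N minimizing {f·α} among 0 < m < N, and last(N) the unique l with 0 < l < N maximizing {l·α}. Then N ≤ first(N) + last(N). -/
/-!
Put `m = f + l`. Up to an integer, `{m α} = {f α} + {l α}`, so either no wrap-around occurs and
`{m α} > {l α}` (as `{f α} > 0` by irrationality), or it does and `{m α} = {f α} + {l α} - 1 < {f α}`.
Either way `m` beats `last` or `first`, so `m` cannot lie in `(0, N)`.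
-/

namespace Int

variable {R : Type*} [Ring R] [LinearOrder R] [IsStrictOrderedRing R] [FloorRing R]

theorem lt_fract_add_or_fract_add_lt {a : R} (b : R) (ha : 0 < fract a) :
    fract b < fract (a + b) ∨ fract (a + b) < fract a := by
  obtain ⟨z, hz⟩ := fract_add a b
  rw [sub_sub, sub_eq_iff_eq_add'] at hz
  rcases le_or_gt 0 z with hz0 | hz0
  · left
    calc fract b < fract a + fract b := lt_add_of_pos_left _ ha
      _ ≤ fract a + fract b + z := le_add_of_nonneg_right (mod_cast hz0)
      _ = fract (a + b) := hz.symm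
  · right
    have hz1 : (z : R) ≤ -1 := mod_cast Int.le_sub_one_of_lt hz0
    calc fract (a + b) = fract a + (fract b + z) := by rw [hz, add_assoc]
      _ < fract a + (1 + -1) := add_lt_add_right (add_lt_add_of_lt_of_le (fract_lt_one b) hz1) _
      _ = fract a := by rw [add_neg_cancel, add_zero]

end Int

theorem Irrational.fract_pos {x : ℝ} (h : Irrational x) : 0 < Int.fract x :=
  Int.fract_pos.mpr (h.ne_int _)

theorem N_le_first_add_last_general (α : ℝ) (hα : Irrational α) (N : ℕ)
    (f l : ℕ) (hf0 : 0 < f)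
    (hf : ∀ m : ℕ, 0 < m → m < N → Int.fract (f * α) ≤ Int.fract (m * α))
    (hl : ∀ m : ℕ, 0 < m → m < N → Int.fract (m * α) ≤ Int.fract (l * α)) :
    N ≤ f + l := by
  by_contra! hlt
  have hm0 : 0 < f + l := by omega
  have hcast : ((f + l : ℕ) : ℝ) * α = f * α + l * α := by push_cast; ring
  have hfα : 0 < Int.fract (f * α) := (hα.natCast_mul hf0.ne').fract_pos
  rcases Int.lt_fract_add_or_fract_add_lt (l * α) hfα with h | h
  · linarith [hl (f + l) hm0 hlt, hcast ▸ h]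
  · linarith [hf (f + l) hm0 hlt, hcast ▸ h]

theorem N_le_first_add_last (α : ℝ) (hα : Irrational α) (N : ℕ) (hN : 2 ≤ N)
    (f l : ℕ) (hf0 : 0 < f) (hfN : f < N)
    (hf : ∀ m : ℕ, 0 < m → m < N → Int.fract (f * α) ≤ Int.fract (m * α))
    (hl0 : 0 < l) (hlN : l < N)
    (hl : ∀ m : ℕ, 0 < m → m < N → Int.fract (m * α) ≤ Int.fract (l * α)) :
    N ≤ f + l :=
  N_le_first_add_last_general α hα N f l hf0 hf hl
end

section
/- Let α be irrational, N ≥ 2, and set M = first(N) + last(N). Then first(N) = first(M), i.e., for all m with 0 < m < M, {first(N)·α} ≤ {m·α}. -/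
/-!
If some `m` with `N ≤ m < f + l` had `{m α} < {f α} ≤ {l α}`, then subtracting `f α` and `l α`
wraps around once: `{(m - f) α} = {m α} - {f α} + 1` and `{(m - l) α} = {m α} - {l α} + 1`.
Since `m - f < l` and `m - l < f` lie below `N`, extremality of `l` and `f` gives
`{m α} + 1 ≤ {f α} + {l α} ≤ {m α} + 1`, hence `{(m - f) α} = {l α}`, which is impossible for
irrational `α` as `m - f ≠ l`.
-/

open Int

theorem Int.fract_sub_of_fract_lt {R : Type*} [CommRing R] [LinearOrder R] [IsStrictOrderedRing R]
    [FloorRing R] {a b : R} (h : fract a < fract b) : fract (a - b) = fract a - fract b + 1 := by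
  refine fract_eq_iff.2 ⟨by linarith [fract_lt_one b, fract_nonneg a], by linarith,
    ⌊a⌋ - ⌊b⌋ - 1, ?_⟩
  push_cast
  simp only [fract]
  ring

theorem Int.fract_natCast_sub_mul_of_fract_lt {R : Type*} [CommRing R] [LinearOrder R]
    [IsStrictOrderedRing R] [FloorRing R] {α : R} {m p : ℕ} (hpm : p ≤ m)
    (h : fract (m * α) < fract (p * α)) :
    fract (((m - p : ℕ) : R) * α) = fract (m * α) - fract (p * α) + 1 := by
  rw [Nat.cast_sub hpm, sub_mul]
  exact fract_sub_of_fract_lt h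

theorem Irrational.injective_fract_natCast_mul {α : ℝ} (hα : Irrational α) :
    Function.Injective fun n : ℕ => fract (n * α) := by
  intro p q hpq
  obtain ⟨z, hz⟩ := fract_eq_fract.1 hpq
  by_contra hne
  have hk : (p : ℤ) - q ≠ 0 := sub_ne_zero.2 (by exact_mod_cast hne)
  refine (hα.intCast_mul hk).ne_int z ?_
  push_cast
  linarith

theorem first_N_eq_first_M_general (α : ℝ) (hα : Irrational α) (N : ℕ)
    (f l : ℕ) (hf0 : 0 < f) (hfN : f < N)
    (hf : ∀ m : ℕ, 0 < m → m < N → Int.fract (f * α) ≤ Int.fract (m * α))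
    (hlN : l < N)
    (hl : ∀ m : ℕ, 0 < m → m < N → Int.fract (m * α) ≤ Int.fract (l * α)) :
    ∀ m : ℕ, 0 < m → m < f + l → Int.fract (f * α) ≤ Int.fract (m * α) := by
  intro m hm0 hmM
  by_cases hmN : m < N
  · exact hf m hm0 hmN
  by_contra! hmf
  have hml : fract (m * α) < fract (l * α) := hmf.trans_le (hl f hf0 hfN)
  have wrap_f := fract_natCast_sub_mul_of_fract_lt (by omega : f ≤ m) hmf
  have wrap_l := fract_natCast_sub_mul_of_fract_lt (by omega : l ≤ m) hml
  have le_l := hl (m - f) (by omega) (by omega)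
  have f_le := hf (m - l) (by omega) (by omega)
  have : m - f = l := hα.injective_fract_natCast_mul (by dsimp only; linarith)
  omega

theorem first_N_eq_first_M (α : ℝ) (hα : Irrational α) (N : ℕ) (hN : 2 ≤ N)
    (f l : ℕ) (hf0 : 0 < f) (hfN : f < N)
    (hf : ∀ m : ℕ, 0 < m → m < N → Int.fract (f * α) ≤ Int.fract (m * α))
    (hl0 : 0 < l) (hlN : l < N)
    (hl : ∀ m : ℕ, 0 < m → m < N → Int.fract (m * α) ≤ Int.fract (l * α)) :
    ∀ m : ℕ, 0 < m → m < f + l → Int.fract (f * α) ≤ Int.fract (m * α) :=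
  first_N_eq_first_M_general α hα N f l hf0 hfN hf hlN hl
end

section
/- Let α be irrational, N ≥ 2, and set M = first(N) + last(N). Then last(N) = last(M), i.e., for all m with 0 < m < M, {m·α} ≤ {last(N)·α}. -/
theorem last_N_eq_last_M (α : ℝ) (hα : Irrational α) (N : ℕ) (hN : 2 ≤ N)
    (f l : ℕ) (hf0 : 0 < f) (hfN : f < N)
    (hf : ∀ m : ℕ, 0 < m → m < N → Int.fract (f * α) ≤ Int.fract (m * α))
    (hl0 : 0 < l) (hlN : l < N)
    (hl : ∀ m : ℕ, 0 < m → m < N → Int.fract (m * α) ≤ Int.fract (l * α)) :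
    ∀ m : ℕ, 0 < m → m < f + l → Int.fract (m * α) ≤ Int.fract (l * α) := by
  intro m hm0 hmM
  rcases lt_or_ge m N with hmN | hNm
  · exact hl m hm0 hmN
  · set k := m - f with hk
    have hfm : f < m := lt_of_lt_of_le hfN hNm
    have hk0 : 0 < k := Nat.sub_pos_of_lt hfm
    have hkl : k < l := by omega
    have hkN : k < N := lt_trans hkl hlN
    have hmkf : (m : ℝ) * α = (k : ℝ) * α + (f : ℝ) * α := by
      have h : (m : ℝ) = (k : ℝ) + (f : ℝ) := by
        have : m = k + f := by omega
        rw [this]; push_cast; ring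
      rw [h]; ring
    have hkle : Int.fract ((k : ℝ) * α) ≤ Int.fract ((l : ℝ) * α) := hl k hk0 hkN
    have key : Int.fract ((m : ℝ) * α)
        = Int.fract (Int.fract ((k : ℝ) * α) + Int.fract ((f : ℝ) * α)) := by
      rw [hmkf]
      rw [show (k : ℝ) * α + (f : ℝ) * α
          = (Int.fract ((k : ℝ) * α) + Int.fract ((f : ℝ) * α))
            + ((⌊(k : ℝ) * α⌋ : ℝ) + (⌊(f : ℝ) * α⌋ : ℝ)) by unfold Int.fract; ring]
      rw [← Int.cast_add, Int.fract_add_intCast]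
    have hlk : Int.fract (((l - k : ℕ) : ℝ) * α)
        = Int.fract ((l : ℝ) * α) - Int.fract ((k : ℝ) * α) := by
      have hcast : ((l - k : ℕ) : ℝ) * α = (l : ℝ) * α - (k : ℝ) * α := by
        rw [Nat.cast_sub hkl.le]; ring
      rw [hcast,
        show (l : ℝ) * α - (k : ℝ) * α
          = (Int.fract ((l : ℝ) * α) - Int.fract ((k : ℝ) * α))
            + ((⌊(l : ℝ) * α⌋ : ℝ) - (⌊(k : ℝ) * α⌋ : ℝ)) by unfold Int.fract; ring,
        ← Int.cast_sub, Int.fract_add_intCast]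
      refine Int.fract_eq_self.2 ⟨by linarith, ?_⟩
      have h1 := Int.fract_nonneg ((k : ℝ) * α)
      have h2 := Int.fract_lt_one ((l : ℝ) * α)
      linarith
    have hflk : Int.fract ((f : ℝ) * α)
        ≤ Int.fract ((l : ℝ) * α) - Int.fract ((k : ℝ) * α) := by
      rw [← hlk]
      exact hf (l - k) (by omega) (by omega)
    rcases lt_or_ge (Int.fract ((k : ℝ) * α) + Int.fract ((f : ℝ) * α)) 1 with hs | hs
    · rw [key, Int.fract_eq_self.2 ⟨add_nonneg (Int.fract_nonneg _) (Int.fract_nonneg _), hs⟩]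
      linarith
    · have hf1 := Int.fract_lt_one ((f : ℝ) * α)
      have hk1 := Int.fract_lt_one ((k : ℝ) * α)
      have : Int.fract (Int.fract ((k : ℝ) * α) + Int.fract ((f : ℝ) * α))
          = Int.fract ((k : ℝ) * α) + Int.fract ((f : ℝ) * α) - 1 := by
        conv_lhs => rw [show Int.fract ((k : ℝ) * α) + Int.fract ((f : ℝ) * α)
            = (Int.fract ((k : ℝ) * α) + Int.fract ((f : ℝ) * α) - 1) + ((1 : ℤ) : ℝ) by
            push_cast; ring, Int.fract_add_intCast]
        exact Int.fract_eq_self.2 ⟨by linarith, by linarith⟩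
      rw [key, this]
      linarith
end

section
/- Let α be irrational and N ≥ 2 with N = first(N) + last(N). Then for every m with last(N) ≤ m < N, the point m - last(N) is the successor of m on the circle: 0 ≤ m - last(N) < N, and for every i with 0 < i < N, it is not the case that {m·α} < {i·α} < {(m - last(N))·α}. -/
/-!
Write `u = {m α}` and `v = {l α}`, the largest of the points. Since `{(m - l) α} ≤ u - v + 1`, it
suffices that every point `w = {i α}` above `u` lies at distance at least `1 - v` above it. For
`i < m` the point of `m - i` is `u - w + 1`, which cannot exceed `v`. For `i > m` the point of
`i - m` is `w - u`, so if `w - u < 1 - v` then `i - m + l`, still below `N` because `l ≤ m`,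
would have the point `(w - u) + v > v`.
-/

namespace Int

variable {R : Type*} [CommRing R] [LinearOrder R] [IsStrictOrderedRing R] [FloorRing R] {a b : R}

theorem fract_sub_of_fract_le (h : fract b ≤ fract a) : fract (a - b) = fract a - fract b := by
  refine fract_eq_iff.2 ⟨sub_nonneg.2 h, ?_, ⌊a⌋ - ⌊b⌋, ?_⟩
  · linarith [fract_lt_one a, fract_nonneg b]
  · simp only [fract]; push_cast; abel

theorem fract_sub_of_fract_lt_s15 (h : fract a < fract b) :
    fract (a - b) = fract a - fract b + 1 := by
  refine fract_eq_iff.2 ⟨?_, by linarith, ⌊a⌋ - ⌊b⌋ - 1, ?_⟩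
  · linarith [fract_nonneg a, fract_lt_one b]
  · simp only [fract]; push_cast; abel

theorem fract_add_of_fract_add_fract_lt_one (h : fract a + fract b < 1) :
    fract (a + b) = fract a + fract b := by
  refine fract_eq_iff.2 ⟨add_nonneg (fract_nonneg a) (fract_nonneg b), h, ⌊a⌋ + ⌊b⌋, ?_⟩
  simp only [fract]; push_cast; abel

theorem fract_sub_le_fract_sub_fract_add_one (a b : R) :
    fract (a - b) ≤ fract a - fract b + 1 := by
  rcases le_or_gt (fract b) (fract a) with h | h
  · rw [fract_sub_of_fract_le h]; linarith
  · rw [fract_sub_of_fract_lt_s15 h]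

end Int

def IsLast (α : ℝ) (N l : ℕ) : Prop :=
  ∀ m : ℕ, 0 < m → m < N → Int.fract (m * α) ≤ Int.fract (l * α)

namespace IsLast

variable {α : ℝ} {N l m i : ℕ}

theorem one_sub_fract_le_of_lt (hl : IsLast α N l) (hi : i < m) (hm : m < N)
    (h : Int.fract (m * α) < Int.fract (i * α)) :
    1 - Int.fract (l * α) ≤ Int.fract (i * α) - Int.fract (m * α) := by
  have hmi := hl (m - i) (by omega) (by omega)
  rw [Nat.cast_sub hi.le, sub_mul, Int.fract_sub_of_fract_lt_s15 h] at hmi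
  linarith

theorem one_sub_fract_le_of_gt (hl : IsLast α N l) (hlm : l ≤ m) (hm : m < i) (hi : i < N)
    (h : Int.fract (m * α) < Int.fract (i * α)) :
    1 - Int.fract (l * α) ≤ Int.fract (i * α) - Int.fract (m * α) := by
  by_contra! hlt
  have hdiff : Int.fract (((i - m : ℕ) : ℝ) * α) = Int.fract (i * α) - Int.fract (m * α) := by
    rw [Nat.cast_sub hm.le, sub_mul, Int.fract_sub_of_fract_le h.le]
  have hj := hl (i - m + l) (by omega) (by omega)
  rw [Nat.cast_add, add_mul, Int.fract_add_of_fract_add_fract_lt_one (by rw [hdiff]; linarith),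
    hdiff] at hj
  linarith

theorem one_sub_fract_le (hl : IsLast α N l) (hlm : l ≤ m) (hm : m < N) (hi : i < N)
    (h : Int.fract (m * α) < Int.fract (i * α)) :
    1 - Int.fract (l * α) ≤ Int.fract (i * α) - Int.fract (m * α) := by
  rcases lt_trichotomy i m with him | rfl | hmi
  · exact hl.one_sub_fract_le_of_lt him hm h
  · exact absurd h (lt_irrefl _)
  · exact hl.one_sub_fract_le_of_gt hlm hmi hi h

end IsLast

theorem successor_sub_last_general (α : ℝ) (N : ℕ) (l : ℕ)
    (hl : ∀ m : ℕ, 0 < m → m < N → Int.fract (m * α) ≤ Int.fract (l * α)) :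
    ∀ m : ℕ, l ≤ m → m < N →
      m - l < N ∧
      ∀ i : ℕ, 0 < i → i < N →
        ¬(Int.fract (m * α) < Int.fract (i * α) ∧
          Int.fract (i * α) < Int.fract ((m - l : ℕ) * α)) := by
  intro m hlm hmN
  refine ⟨by omega, fun i _ hiN ⟨hmi, hil⟩ => ?_⟩
  have hgap := IsLast.one_sub_fract_le hl hlm hmN hiN hmi
  have hsucc : Int.fract (((m - l : ℕ) : ℝ) * α) ≤ Int.fract (m * α) - Int.fract (l * α) + 1 := by
    rw [Nat.cast_sub hlm, sub_mul]
    exact Int.fract_sub_le_fract_sub_fract_add_one _ _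
  linarith

theorem successor_sub_last (α : ℝ) (hα : Irrational α) (N : ℕ) (hN : 2 ≤ N)
    (f l : ℕ) (hf0 : 0 < f) (hfN : f < N)
    (hf : ∀ m : ℕ, 0 < m → m < N → Int.fract (f * α) ≤ Int.fract (m * α))
    (hl0 : 0 < l) (hlN : l < N)
    (hl : ∀ m : ℕ, 0 < m → m < N → Int.fract (m * α) ≤ Int.fract (l * α))
    (hNM : N = f + l) :
    ∀ m : ℕ, l ≤ m → m < N →
      m - l < N ∧
      ∀ i : ℕ, 0 < i → i < N →
        ¬(Int.fract (m * α) < Int.fract (i * α) ∧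
          Int.fract (i * α) < Int.fract ((m - l : ℕ) * α)) :=
  successor_sub_last_general α N l hl
end

section
/- Let α be irrational, N ≥ 2, and write first = first(N), last = last(N). For every n with N - first ≤ n < last, there does not exist k with 0 ≤ k < N such that {n·α} < {k·α} < {(n + first - last)·α}. -/
/-! For `0 < w < N` every point `{wα}` lies in `[{fα}, {lα}]`. A point `{kα}` strictly between
`{nα}` and `{(n + f - l)α}` would satisfy `0 < {kα} - {nα} < {fα} + 1 - {lα}`, because
`{(n + f - l)α} ≤ {nα} + {fα} - {lα} + 1`. Then, according to whether `k > n + f - N` or not,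
`w = n + f - k` or `w = k + l - n` lies in `(0, N)`, and `{wα}` is the fractional part of a number
in the open interval `({lα} - 1, {fα})`, so it falls outside `[{fα}, {lα}]`. -/

open Int Set

section FloorRing

variable {R : Type*} [CommRing R] [LinearOrder R] [IsStrictOrderedRing R] [FloorRing R]

theorem Int.fract_notMem_Icc_of_mem_Ioo {a b s : R} (hs : s ∈ Ioo (b - 1) a) :
    fract s ∉ Icc a b := by
  rintro ⟨ha, hb⟩
  have hfloor_neg : ⌊s⌋ < 0 := by
    by_contra! h
    have : (0 : R) ≤ ⌊s⌋ := by exact_mod_cast h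
    linarith [hs.2, self_sub_floor s]
  have hfloor_le : (⌊s⌋ : R) ≤ -1 := by exact_mod_cast (show ⌊s⌋ ≤ -1 by omega)
  linarith [hs.1, self_sub_floor s]

theorem Int.fract_le_add_one {u : R} (hu : -1 ≤ u) : fract u ≤ u + 1 := by
  have : (-1 : ℤ) ≤ ⌊u⌋ := le_floor.2 (by exact_mod_cast hu)
  have : (-1 : R) ≤ ⌊u⌋ := by exact_mod_cast this
  linarith [self_sub_floor u]

theorem Int.fract_fract_add_sub (x y z : R) :
    fract (fract x + fract y - fract z) = fract (x + y - z) :=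
  fract_eq_fract.2 ⟨⌊z⌋ - ⌊x⌋ - ⌊y⌋, by push_cast; simp only [fract]; abel⟩

theorem Int.fract_natCast_add_sub_mul (α : R) {i j k : ℕ} (h : k ≤ i + j) :
    fract (((i + j - k : ℕ) : R) * α) =
      fract (fract (i * α) + fract (j * α) - fract (k * α)) := by
  rw [fract_fract_add_sub, Nat.cast_sub h]
  push_cast
  rw [sub_mul, add_mul]

theorem Int.fract_natCast_add_sub_mul_le (α : R) {i j k : ℕ} (h : k ≤ i + j) :
    fract (((i + j - k : ℕ) : R) * α) ≤
      fract (i * α) + fract (j * α) - fract (k * α) + 1 := by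
  rw [fract_natCast_add_sub_mul α h]
  exact fract_le_add_one <| by
    linarith [fract_nonneg ((i : R) * α), fract_nonneg ((j : R) * α), fract_lt_one ((k : R) * α)]

end FloorRing

theorem third_gap_general (α : ℝ) (N : ℕ)
    (f l : ℕ) (hfN : f < N)
    (hf : ∀ m : ℕ, 0 < m → m < N → Int.fract (f * α) ≤ Int.fract (m * α))
    (hlN : l < N)
    (hl : ∀ m : ℕ, 0 < m → m < N → Int.fract (m * α) ≤ Int.fract (l * α)) :
    ∀ n : ℕ, N - f ≤ n → n < l →
      ¬∃ k : ℕ, k < N ∧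
        Int.fract (n * α) < Int.fract (k * α) ∧
        Int.fract (k * α) < Int.fract ((n + f - l : ℕ) * α) := by
  rintro n hn hnl ⟨k, hkN, hnk, hkm⟩
  set a := fract ((f : ℝ) * α)
  set b := fract ((l : ℝ) * α)
  have hmem : ∀ w : ℕ, 0 < w → w < N → fract ((w : ℝ) * α) ∈ Icc a b :=
    fun w hw0 hwN ↦ ⟨hf w hw0 hwN, hl w hw0 hwN⟩
  have hkn : fract ((k : ℝ) * α) - fract ((n : ℝ) * α) < a + 1 - b := by
    linarith [fract_natCast_add_sub_mul_le α (i := n) (j := f) (k := l) (by omega)]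
  rcases le_or_gt k (n + f - N) with hk | hk
  · refine fract_notMem_Icc_of_mem_Ioo (a := a) (b := b)
      (s := fract ((k : ℝ) * α) + b - fract ((n : ℝ) * α) - 1)
      ⟨by linarith, by linarith⟩ ?_
    rw [fract_sub_one, ← fract_natCast_add_sub_mul α (by omega)]
    exact hmem _ (by omega) (by omega)
  · refine fract_notMem_Icc_of_mem_Ioo (a := a) (b := b)
      (s := fract ((n : ℝ) * α) + a - fract ((k : ℝ) * α))
      ⟨by linarith, by linarith⟩ ?_
    rw [← fract_natCast_add_sub_mul α (by omega)]
    exact hmem _ (by omega) (by omega)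

theorem third_gap (α : ℝ) (hα : Irrational α) (N : ℕ) (hN : 2 ≤ N)
    (f l : ℕ) (hf0 : 0 < f) (hfN : f < N)
    (hf : ∀ m : ℕ, 0 < m → m < N → Int.fract (f * α) ≤ Int.fract (m * α))
    (hl0 : 0 < l) (hlN : l < N)
    (hl : ∀ m : ℕ, 0 < m → m < N → Int.fract (m * α) ≤ Int.fract (l * α)) :
    ∀ n : ℕ, N - f ≤ n → n < l →
      ¬∃ k : ℕ, k < N ∧
        Int.fract (n * α) < Int.fract (k * α) ∧
        Int.fract (k * α) < Int.fract ((n + f - l : ℕ) * α) :=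
  third_gap_general α N f l hfN hf hlN hl
end
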